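/- arXiv:1505.05020 — 4 statements merged into one kernel-verified Lean document; each statement's English description precedes it below -/
import Mathlib

section
/- Let p, q, r, z, w, K, L ∈ ℂ with z ≠ 0, w ≠ 0, K ∉ {0,1}, L ∉ {0,1}, K + p − 1 ≠ 0, L + q − 1 ≠ 0, (K + p − 1)(L + q − 1) + (r − pq) ≠ 0, and suppose z·K(K−1) = K + p − 1 and w·L(L−1) = L + q − 1. Set G = ((K + p − 1)(L + q − 1) + (r − pq)) / (K·L·(K−1)(L−1)). Then G ≠ 0 and 1 − zw/G = (r − pq) / ((K + p − 1)(L + q − 1) + (r − pq)). -/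
/-- Lemma 2.4 (computational content): with `K = K_P(z)`, `L = K_Q(w)`
characterized by `z·K(K-1) = K+p-1`, `w·L(L-1) = L+q-1`, and
`G = G_{P,Q}(K,L)`, one has `G ≠ 0` and the reduced partial bi-free
R-transform is `1 - zw/G = (r-pq)/((K+p-1)(L+q-1)+(r-pq))`. -/
theorem stmt4 (p q r z w K L G : ℂ)
    (hz : z ≠ 0) (hw : w ≠ 0)
    (hK0 : K ≠ 0) (hK1 : K ≠ 1) (hL0 : L ≠ 0) (hL1 : L ≠ 1)
    (hKp : K + p - 1 ≠ 0) (hLq : L + q - 1 ≠ 0)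
    (hden : (K + p - 1) * (L + q - 1) + (r - p * q) ≠ 0)
    (hzK : z * (K * (K - 1)) = K + p - 1)
    (hwL : w * (L * (L - 1)) = L + q - 1)
    (hG : G = ((K + p - 1) * (L + q - 1) + (r - p * q)) /
      (K * L * (K - 1) * (L - 1))) :
    G ≠ 0 ∧
    1 - z * w / G = (r - p * q) / ((K + p - 1) * (L + q - 1) + (r - p * q)) := by
  have hK1' : K - 1 ≠ 0 := sub_ne_zero.mpr hK1
  have hL1' : L - 1 ≠ 0 := sub_ne_zero.mpr hL1
  have hprod : K * L * (K - 1) * (L - 1) ≠ 0 := by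
    exact mul_ne_zero (mul_ne_zero (mul_ne_zero hK0 hL0) hK1') hL1'
  have hGne : G ≠ 0 := by
    rw [hG]
    exact div_ne_zero hden hprod
  refine ⟨hGne, ?_⟩
  rw [hG]
  have hzw : z * w * (K * L * (K - 1) * (L - 1)) = (K + p - 1) * (L + q - 1) := by
    linear_combination w * (L * (L - 1)) * hzK + (K + p - 1) * hwL
  rw [div_div_eq_mul_div]
  field_simp
  linear_combination -hzw
end

section
/- Let b ∈ ℝ and let μ be a probability measure on ℝ concentrated on (−∞, b], with Cauchy transform G(z) = ∫ (z−x)⁻¹ dμ(x) for z > b. If (z_n) is a sequence in (b, ∞) such that G(z_n) → +∞ as n → ∞, then z_n → b and (z_n − b)·G(z_n) → μ({b}). -/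
/-!
Since `μ` lives on `(-∞, b]`, the integrand `(z - x)⁻¹` is at most `(z - b)⁻¹`, so
`G(z) ≤ (z - b)⁻¹` and `G(z_n) → ∞` forces `z_n ↓ b`. Along `z ↓ b` the functions
`x ↦ (z - b) / (z - x)` take values in `[0, 1]` on `(-∞, b]` and converge to the indicator
of `{b}`, so dominated convergence gives `(z - b) G(z) → μ {b}`.
-/

open MeasureTheory Filter Topology

noncomputable def cauchyTransform (μ : Measure ℝ) (z : ℝ) : ℝ :=
  ∫ x, (z - x)⁻¹ ∂μ

namespace cauchyTransform

variable {μ : Measure ℝ} {b z x : ℝ}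

lemma integrable_inv_sub [IsFiniteMeasure μ] (hμ : ∀ᵐ x ∂μ, x ≤ b) (hbz : b < z) :
    Integrable (fun x => (z - x)⁻¹) μ := by
  refine (integrable_const (z - b)⁻¹).mono'
    (measurable_const.sub measurable_id).inv.aestronglyMeasurable ?_
  filter_upwards [hμ] with x hx
  rw [Real.norm_of_nonneg (inv_nonneg.2 (by linarith))]
  exact inv_anti₀ (by linarith) (by linarith)

lemma le_inv_sub [IsProbabilityMeasure μ] (hμ : ∀ᵐ x ∂μ, x ≤ b) (hbz : b < z) :
    cauchyTransform μ z ≤ (z - b)⁻¹ := calc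
  cauchyTransform μ z ≤ ∫ _, (z - b)⁻¹ ∂μ := by
    refine integral_mono_ae (integrable_inv_sub hμ hbz) (integrable_const _) ?_
    filter_upwards [hμ] with x hx
    exact inv_anti₀ (by linarith) (by linarith)
  _ = (z - b)⁻¹ := by simp

lemma tendsto_nhdsGT_of_tendsto_atTop [IsProbabilityMeasure μ] {ι : Type*} {l : Filter ι}
    {z : ι → ℝ} (hμ : ∀ᵐ x ∂μ, x ≤ b) (hz : ∀ᶠ i in l, b < z i)
    (hG : Tendsto (fun i => cauchyTransform μ (z i)) l atTop) :
    Tendsto z l (𝓝[>] b) := by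
  have hinv : Tendsto (fun i => (z i - b)⁻¹) l atTop :=
    tendsto_atTop_mono' l (hz.mono fun i hi => le_inv_sub hμ hi) hG
  have hsub : Tendsto (fun i => z i - b) l (𝓝 0) := by
    simpa [Function.comp_def] using tendsto_inv_atTop_zero.comp hinv
  exact tendsto_nhdsWithin_iff.2 ⟨by simpa using hsub.add_const b, hz⟩

lemma tendsto_sub_mul_inv_sub (hx : x ≤ b) :
    Tendsto (fun z => (z - b) * (z - x)⁻¹) (𝓝[>] b) (𝓝 (({b} : Set ℝ).indicator 1 x)) := by
  rcases hx.eq_or_lt with rfl | hlt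
  · rw [Set.indicator_of_mem (Set.mem_singleton x)]
    refine tendsto_const_nhds.congr' ?_
    filter_upwards [self_mem_nhdsWithin] with z hz
    exact (mul_inv_cancel₀ (sub_pos.2 hz).ne').symm
  · rw [Set.indicator_of_notMem (Set.mem_singleton_iff.not.2 hlt.ne)]
    refine tendsto_nhdsWithin_of_tendsto_nhds ?_
    have hcont : ContinuousAt (fun z => (z - b) * (z - x)⁻¹) b :=
      (continuous_sub_right b).continuousAt.mul
        ((continuous_sub_right x).continuousAt.inv₀ (sub_pos.2 hlt).ne')
    simpa using hcont.tendsto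

lemma norm_sub_mul_inv_sub_le_one (hbz : b < z) (hx : x ≤ b) :
    ‖(z - b) * (z - x)⁻¹‖ ≤ 1 := by
  have hzx : 0 < z - x := by linarith
  rw [Real.norm_of_nonneg (by positivity), ← div_eq_mul_inv, div_le_one hzx]
  linarith

theorem tendsto_sub_mul [IsFiniteMeasure μ] (hμ : ∀ᵐ x ∂μ, x ≤ b) :
    Tendsto (fun z => (z - b) * cauchyTransform μ z) (𝓝[>] b) (𝓝 (μ.real {b})) := by
  simp only [cauchyTransform, ← integral_const_mul]
  rw [← integral_indicator_one (measurableSet_singleton b)]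
  refine tendsto_integral_filter_of_dominated_convergence (fun _ => 1)
    (Eventually.of_forall fun z =>
      (measurable_const.mul (measurable_const.sub measurable_id).inv).aestronglyMeasurable)
    ?_ (integrable_const 1) ?_
  · filter_upwards [self_mem_nhdsWithin] with z hz
    filter_upwards [hμ] with x hx
    exact norm_sub_mul_inv_sub_le_one hz hx
  · filter_upwards [hμ] with x hx
    exact tendsto_sub_mul_inv_sub hx

end cauchyTransform

/-- For a probability measure `μ` on `ℝ` concentrated on `(-∞, b]` with
Cauchy transform `G(z) = ∫ (z-x)⁻¹ dμ(x)`, if `z_n ∈ (b, ∞)` is a sequence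
with `G(z_n) → +∞`, then `z_n → b` and `(z_n - b)·G(z_n) → μ({b})`. -/
theorem stmt10 (b : ℝ) (μ : Measure ℝ) [IsProbabilityMeasure μ]
    (hsupp : μ (Set.Ioi b) = 0)
    (z : ℕ → ℝ) (hz : ∀ n, z n ∈ Set.Ioi b)
    (hG : Tendsto (fun n => ∫ x, (z n - x)⁻¹ ∂μ) atTop atTop) :
    Tendsto z atTop (𝓝 b) ∧
    Tendsto (fun n => (z n - b) * ∫ x, (z n - x)⁻¹ ∂μ)
      atTop (𝓝 ((μ {b}).toReal)) := by
  have hμ : ∀ᵐ x ∂μ, x ≤ b := by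
    simpa only [ae_iff, not_le] using (show μ {x | b < x} = 0 from hsupp)
  have hzb : Tendsto z atTop (𝓝[>] b) :=
    cauchyTransform.tendsto_nhdsGT_of_tendsto_atTop hμ (Eventually.of_forall hz) hG
  exact ⟨tendsto_nhdsWithin_iff.1 hzb |>.1, (cauchyTransform.tendsto_sub_mul hμ).comp hzb⟩
end

section
/- Let μ and ν be compactly supported probability measures on ℝ². Set F(s,t) = μ((−∞,s]×(−∞,t]), F₁(s) = μ((−∞,s]×ℝ), F₂(t) = μ(ℝ×(−∞,t]), and define G, G₁, G₂ analogously from ν. Set H₁(s) = max(F₁(s)+G₁(s)−1, 0), H₂(t) = max(F₂(t)+G₂(t)−1, 0), and define H(s,t) = H₁(s)H₂(t) / (F₁(s)F₂(t)/F(s,t) + G₁(s)G₂(t)/G(s,t) − 1) whenever F(s,t) > 0, G(s,t) > 0, H₁(s) > 0 and H₂(t) > 0, and H(s,t) = 0 otherwise. Then H is nondecreasing in each variable (s₁ ≤ s₂ and t₁ ≤ t₂ imply H(s₁,t₁) ≤ H(s₂,t₂)) and right-continuous: if s_n ↓ s and t_n ↓ t then H(s_n,t_n) ↓ H(s,t).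 -/
open MeasureTheory Filter Topology

/-- Joint distribution function `F(s,t) = μ((-∞,s] × (-∞,t])`. -/
noncomputable def jointCdf (μ : Measure (ℝ × ℝ)) (s t : ℝ) : ℝ :=
  (μ (Set.Iic s ×ˢ Set.Iic t)).toReal

/-- First marginal distribution function `F₁(s) = μ((-∞,s] × ℝ)`. -/
noncomputable def marginCdf1 (μ : Measure (ℝ × ℝ)) (s : ℝ) : ℝ :=
  (μ (Set.Iic s ×ˢ (Set.univ : Set ℝ))).toReal

/-- Second marginal distribution function `F₂(t) = μ(ℝ × (-∞,t])`. -/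
noncomputable def marginCdf2 (μ : Measure (ℝ × ℝ)) (t : ℝ) : ℝ :=
  (μ ((Set.univ : Set ℝ) ×ˢ Set.Iic t)).toReal

/-- The bi-free max-convolution `H = F ⊻⊻ G` of Definition 3.1:
`H(s,t) = H₁(s)H₂(t) / (F₁(s)F₂(t)/F(s,t) + G₁(s)G₂(t)/G(s,t) - 1)` when
`F(s,t) > 0`, `G(s,t) > 0`, `H₁(s) > 0`, `H₂(t) > 0`, and `H(s,t) = 0`
otherwise, where `H₁ = F₁ ⊻ G₁ = max (F₁+G₁-1) 0` and
`H₂ = F₂ ⊻ G₂ = max (F₂+G₂-1) 0`. -/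
noncomputable def biFreeMaxConv (μ ν : Measure (ℝ × ℝ)) (s t : ℝ) : ℝ :=
  if 0 < jointCdf μ s t ∧ 0 < jointCdf ν s t ∧
      0 < max (marginCdf1 μ s + marginCdf1 ν s - 1) 0 ∧
      0 < max (marginCdf2 μ t + marginCdf2 ν t - 1) 0 then
    max (marginCdf1 μ s + marginCdf1 ν s - 1) 0 *
      max (marginCdf2 μ t + marginCdf2 ν t - 1) 0 /
      (marginCdf1 μ s * marginCdf2 μ t / jointCdf μ s t +
        marginCdf1 ν s * marginCdf2 ν t / jointCdf ν s t - 1)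
  else 0

/-! ### Pure algebra lemmas -/

lemma star_ineq (a a' b' c u u' : ℝ) (hu : 0 < u) (huu : u ≤ u') (hu'c : u' ≤ c)
    (hua : u ≤ a) (haa : a ≤ a') (hb1 : b' ≤ 1) (hh : 0 < a + b' - 1) :
    (a + b' - 1) * (a' * (c - u') / u') ≤ (a' + b' - 1) * (a * (c - u) / u) := by
  have hu' : (0:ℝ) < u' := lt_of_lt_of_le hu huu
  have hc : (0:ℝ) < c := lt_of_lt_of_le hu' hu'c
  have ha : 0 < a := lt_of_lt_of_le hu hua
  have key1 : (a + b' - 1) * a' ≤ (a' + b' - 1) * a := by nlinarith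
  have key2 : (c - u') * u ≤ (c - u) * u' := by nlinarith
  have h1 : ((a + b' - 1) * (a' * (c - u'))) / u' ≤ ((a' + b' - 1) * (a * (c - u))) / u := by
    rw [div_le_div_iff₀ hu' hu]
    calc (a + b' - 1) * (a' * (c - u')) * u = ((a + b' - 1) * a') * ((c - u') * u) := by ring
      _ ≤ ((a' + b' - 1) * a) * ((c - u) * u') := by
          apply mul_le_mul key1 key2 (by nlinarith) (by nlinarith)
      _ = (a' + b' - 1) * (a * (c - u)) * u' := by ring
  calc (a + b' - 1) * (a' * (c - u') / u') = ((a + b' - 1) * (a' * (c - u'))) / u' := by ring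
    _ ≤ ((a' + b' - 1) * (a * (c - u))) / u := h1
    _ = (a' + b' - 1) * (a * (c - u) / u) := by ring

lemma denom_identity (a b c d u w : ℝ) (hu : u ≠ 0) (hw : w ≠ 0) :
    a*c/u + b*d/w - 1 = (a + b - 1) + a*(c-u)/u + b*(d-w)/w := by
  field_simp; ring

lemma max_pos' (x : ℝ) (h : 0 < max x 0) : 0 < x := by
  rcases lt_max_iff.1 h with h' | h'
  · exact h'
  · simpa using h'

lemma formula_comm (a b c d u w : ℝ) :
    max (a+b-1) 0 * max (c+d-1) 0 / (a*c/u + b*d/w - 1)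
      = max (c+d-1) 0 * max (a+b-1) 0 / (c*a/u + d*b/w - 1) := by
  rw [mul_comm (max (a+b-1) 0), mul_comm a c, mul_comm b d]

lemma formula_swap (a b c d u w : ℝ) :
    max (a+b-1) 0 * max (c+d-1) 0 / (a*c/u + b*d/w - 1)
      = max (b+a-1) 0 * max (d+c-1) 0 / (b*d/w + a*c/u - 1) := by
  rw [add_comm a b, add_comm c d, add_comm (a*c/u) (b*d/w)]

section Formula
variable (a b c d u w : ℝ)

lemma denom_pos (hu : 0 < u) (hw : 0 < w)
    (hua : u ≤ a) (huc : u ≤ c) (hwb : w ≤ b) (hwd : w ≤ d)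
    (hh1 : 0 < a + b - 1) : 0 < a*c/u + b*d/w - 1 := by
  have ha : 0 < a := lt_of_lt_of_le hu hua
  have hb : 0 < b := lt_of_lt_of_le hw hwb
  have hTa : 0 ≤ a*(c-u)/u := div_nonneg (mul_nonneg ha.le (by linarith)) hu.le
  have hTb : 0 ≤ b*(d-w)/w := div_nonneg (mul_nonneg hb.le (by linarith)) hw.le
  rw [denom_identity a b c d u w hu.ne' hw.ne']; linarith

lemma formula_nonneg (hu : 0 < u) (hw : 0 < w)
    (hua : u ≤ a) (huc : u ≤ c) (hwb : w ≤ b) (hwd : w ≤ d)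
    (hh1 : 0 < a + b - 1) :
    0 ≤ max (a+b-1) 0 * max (c+d-1) 0 / (a*c/u + b*d/w - 1) :=
  div_nonneg (mul_nonneg (le_max_right _ _) (le_max_right _ _))
    (denom_pos a b c d u w hu hw hua huc hwb hwd hh1).le

lemma formula_le_h1 (hu : 0 < u) (hw : 0 < w)
    (hua : u ≤ a) (huc : u ≤ c) (hwb : w ≤ b) (hwd : w ≤ d)
    (hh1 : 0 < a + b - 1) (hh2 : 0 < c + d - 1) :
    max (a+b-1) 0 * max (c+d-1) 0 / (a*c/u + b*d/w - 1) ≤ max (a+b-1) 0 := by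
  have hDpos := denom_pos a b c d u w hu hw hua huc hwb hwd hh1
  have hc : 0 < c := lt_of_lt_of_le hu huc
  have hd : 0 < d := lt_of_lt_of_le hw hwd
  have e1 : c ≤ a*c/u := by rw [le_div_iff₀ hu]; nlinarith
  have e2 : d ≤ b*d/w := by rw [le_div_iff₀ hw]; nlinarith
  rw [div_le_iff₀ hDpos, max_eq_left hh1.le, max_eq_left hh2.le]
  nlinarith

lemma formula_le_h2 (hu : 0 < u) (hw : 0 < w)
    (hua : u ≤ a) (huc : u ≤ c) (hwb : w ≤ b) (hwd : w ≤ d)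
    (hh1 : 0 < a + b - 1) (hh2 : 0 < c + d - 1) :
    max (a+b-1) 0 * max (c+d-1) 0 / (a*c/u + b*d/w - 1) ≤ max (c+d-1) 0 := by
  rw [formula_comm]
  exact formula_le_h1 c d a b u w hu hw huc hua hwd hwb hh2 hh1

lemma formula_le_u (hu : 0 < u) (hw : 0 < w)
    (hua : u ≤ a) (huc : u ≤ c) (hwb : w ≤ b) (hwd : w ≤ d)
    (hb1 : b ≤ 1) (hd1 : d ≤ 1)
    (hh1 : 0 < a + b - 1) (hh2 : 0 < c + d - 1) :
    max (a+b-1) 0 * max (c+d-1) 0 / (a*c/u + b*d/w - 1) ≤ u := by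
  have hDpos := denom_pos a b c d u w hu hw hua huc hwb hwd hh1
  have hd : 0 < d := lt_of_lt_of_le hw hwd
  have e2 : d ≤ b*d/w := by rw [le_div_iff₀ hw]; nlinarith
  have f2 : u*d ≤ u*(b*d/w) := mul_le_mul_of_nonneg_left e2 hu.le
  have expand : u*(a*c/u + b*d/w - 1) = a*c + u*(b*d/w) - u := by field_simp
  rw [div_le_iff₀ hDpos, max_eq_left hh1.le, max_eq_left hh2.le]
  nlinarith [mul_nonneg (sub_nonneg.2 hua) (sub_nonneg.2 hd1),
    mul_nonneg (sub_nonneg.2 hb1) hh2.le]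

lemma formula_le_w (hu : 0 < u) (hw : 0 < w)
    (hua : u ≤ a) (huc : u ≤ c) (hwb : w ≤ b) (hwd : w ≤ d)
    (ha1 : a ≤ 1) (hc1 : c ≤ 1)
    (hh1 : 0 < a + b - 1) (hh2 : 0 < c + d - 1) :
    max (a+b-1) 0 * max (c+d-1) 0 / (a*c/u + b*d/w - 1) ≤ w := by
  rw [formula_swap]
  exact formula_le_u b a d c w u hw hu hwb hwd hua huc ha1 hc1
    (by linarith) (by linarith)

end Formula

lemma formula_mono (a b c d u w a' b' u' w' : ℝ)
    (hu : 0 < u) (hw : 0 < w)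
    (hua : u ≤ a) (huc : u ≤ c) (hwb : w ≤ b) (hwd : w ≤ d)
    (ha1 : a' ≤ 1) (hb1 : b' ≤ 1)
    (hh1 : 0 < a + b - 1)
    (haa : a ≤ a') (hbb : b ≤ b') (huu : u ≤ u') (hww : w ≤ w')
    (hu'c : u' ≤ c) (hw'd : w' ≤ d) :
    max (a+b-1) 0 * max (c+d-1) 0 / (a*c/u + b*d/w - 1)
      ≤ max (a'+b'-1) 0 * max (c+d-1) 0 / (a'*c/u' + b'*d/w' - 1) := by
  have hu' : (0:ℝ) < u' := lt_of_lt_of_le hu huu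
  have hw' : (0:ℝ) < w' := lt_of_lt_of_le hw hww
  have ha : 0 < a := lt_of_lt_of_le hu hua
  have hb : 0 < b := lt_of_lt_of_le hw hwb
  have hh1' : 0 < a' + b' - 1 := by linarith
  have hTa : 0 ≤ a*(c-u)/u := div_nonneg (mul_nonneg ha.le (by linarith)) hu.le
  have hTb : 0 ≤ b*(d-w)/w := div_nonneg (mul_nonneg hb.le (by linarith)) hw.le
  have hTa' : 0 ≤ a'*(c-u')/u' := div_nonneg (mul_nonneg (by linarith) (by linarith)) hu'.le
  have hTb' : 0 ≤ b'*(d-w')/w' := div_nonneg (mul_nonneg (by linarith) (by linarith)) hw'.le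
  have hD : a*c/u + b*d/w - 1 = (a + b - 1) + a*(c-u)/u + b*(d-w)/w :=
    denom_identity a b c d u w hu.ne' hw.ne'
  have hD' : a'*c/u' + b'*d/w' - 1 = (a' + b' - 1) + a'*(c-u')/u' + b'*(d-w')/w' :=
    denom_identity a' b' c d u' w' hu'.ne' hw'.ne'
  have hDpos : 0 < a*c/u + b*d/w - 1 := by rw [hD]; linarith
  have hD'pos : 0 < a'*c/u' + b'*d/w' - 1 := by rw [hD']; linarith
  have s1 : (a + b - 1) * (a'*(c-u')/u') ≤ (a' + b' - 1) * (a*(c-u)/u) := by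
    have i1 : (a + b - 1) * (a'*(c-u')/u') ≤ (a + b' - 1) * (a'*(c-u')/u') :=
      mul_le_mul_of_nonneg_right (by linarith) hTa'
    have i2 := star_ineq a a' b' c u u' hu huu hu'c hua haa hb1 (by linarith)
    linarith
  have s2 : (a + b - 1) * (b'*(d-w')/w') ≤ (a' + b' - 1) * (b*(d-w)/w) := by
    have i1 : (a + b - 1) * (b'*(d-w')/w') ≤ (b + a' - 1) * (b'*(d-w')/w') :=
      mul_le_mul_of_nonneg_right (by linarith) hTb'
    have i2 := star_ineq b b' a' d w w' hw hww hw'd hwb hbb ha1 (by linarith)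
    linarith
  have key : (a + b - 1) * (a'*c/u' + b'*d/w' - 1) ≤ (a' + b' - 1) * (a*c/u + b*d/w - 1) := by
    rw [hD, hD']; nlinarith
  rw [max_eq_left hh1.le, max_eq_left hh1'.le, div_le_div_iff₀ hDpos hD'pos]
  have hM2 : 0 ≤ max (c+d-1) 0 := le_max_right _ _
  nlinarith [mul_le_mul_of_nonneg_left key hM2]

/-! ### Measure lemmas -/

section Meas
variable (μ : Measure (ℝ × ℝ)) [IsProbabilityMeasure μ]

lemma toReal_meas_mono {S T : Set (ℝ × ℝ)} (h : S ⊆ T) : (μ S).toReal ≤ (μ T).toReal :=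
  ENNReal.toReal_mono (measure_ne_top μ T) (measure_mono h)

omit [IsProbabilityMeasure μ] in
lemma jointCdf_nonneg (s t : ℝ) : 0 ≤ jointCdf μ s t := ENNReal.toReal_nonneg

lemma jointCdf_mono {s₁ s₂ t₁ t₂ : ℝ} (hs : s₁ ≤ s₂) (ht : t₁ ≤ t₂) :
    jointCdf μ s₁ t₁ ≤ jointCdf μ s₂ t₂ :=
  toReal_meas_mono μ (Set.prod_mono (Set.Iic_subset_Iic.2 hs) (Set.Iic_subset_Iic.2 ht))

lemma jointCdf_le_margin1 (s t : ℝ) : jointCdf μ s t ≤ marginCdf1 μ s :=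
  toReal_meas_mono μ (Set.prod_mono subset_rfl (Set.subset_univ _))

lemma jointCdf_le_margin2 (s t : ℝ) : jointCdf μ s t ≤ marginCdf2 μ t :=
  toReal_meas_mono μ (Set.prod_mono (Set.subset_univ _) subset_rfl)

lemma marginCdf1_mono {s₁ s₂ : ℝ} (hs : s₁ ≤ s₂) : marginCdf1 μ s₁ ≤ marginCdf1 μ s₂ :=
  toReal_meas_mono μ (Set.prod_mono (Set.Iic_subset_Iic.2 hs) subset_rfl)

lemma marginCdf2_mono {t₁ t₂ : ℝ} (ht : t₁ ≤ t₂) : marginCdf2 μ t₁ ≤ marginCdf2 μ t₂ :=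
  toReal_meas_mono μ (Set.prod_mono subset_rfl (Set.Iic_subset_Iic.2 ht))

lemma marginCdf1_le_one (s : ℝ) : marginCdf1 μ s ≤ 1 := by
  have := toReal_meas_mono μ (Set.subset_univ (Set.Iic s ×ˢ (Set.univ : Set ℝ)))
  simpa [marginCdf1] using this

lemma marginCdf2_le_one (t : ℝ) : marginCdf2 μ t ≤ 1 := by
  have := toReal_meas_mono μ (Set.subset_univ ((Set.univ : Set ℝ) ×ˢ Set.Iic t))
  simpa [marginCdf2] using this

end Meas

lemma forall_le_iff_le_of_anti {xn : ℕ → ℝ} {x y : ℝ} (hx : Antitone xn)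
    (hxt : Tendsto xn atTop (𝓝 x)) : (∀ n, y ≤ xn n) ↔ y ≤ x := by
  constructor
  · intro h; exact ge_of_tendsto' hxt h
  · intro h n; exact le_trans h (hx.le_of_tendsto hxt n)

section Tendsto
variable (μ : Measure (ℝ × ℝ)) [IsProbabilityMeasure μ]
variable {sn tn : ℕ → ℝ} {s t : ℝ}

lemma tendsto_jointCdf (hsn : Antitone sn) (hst : Tendsto sn atTop (𝓝 s))
    (htn : Antitone tn) (htt : Tendsto tn atTop (𝓝 t)) :
    Tendsto (fun n => jointCdf μ (sn n) (tn n)) atTop (𝓝 (jointCdf μ s t)) := by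
  have hAnt : Antitone fun n => Set.Iic (sn n) ×ˢ Set.Iic (tn n) := fun m n h =>
    Set.prod_mono (Set.Iic_subset_Iic.2 (hsn h)) (Set.Iic_subset_Iic.2 (htn h))
  have h := tendsto_measure_iInter_atTop (μ := μ)
    (s := fun n => Set.Iic (sn n) ×ˢ Set.Iic (tn n))
    (fun n => (measurableSet_Iic.prod measurableSet_Iic).nullMeasurableSet)
    hAnt ⟨0, measure_ne_top μ _⟩
  have hInter : (⋂ n, Set.Iic (sn n) ×ˢ Set.Iic (tn n)) = Set.Iic s ×ˢ Set.Iic t := by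
    ext ⟨x, y⟩
    simp only [Set.mem_iInter, Set.mem_prod, Set.mem_Iic, forall_and]
    rw [forall_le_iff_le_of_anti hsn hst, forall_le_iff_le_of_anti htn htt]
  rw [hInter] at h
  exact (ENNReal.tendsto_toReal (measure_ne_top μ _)).comp h

lemma tendsto_marginCdf1 (hsn : Antitone sn) (hst : Tendsto sn atTop (𝓝 s)) :
    Tendsto (fun n => marginCdf1 μ (sn n)) atTop (𝓝 (marginCdf1 μ s)) := by
  have hAnt : Antitone fun n => Set.Iic (sn n) ×ˢ (Set.univ : Set ℝ) := fun m n h =>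
    Set.prod_mono (Set.Iic_subset_Iic.2 (hsn h)) subset_rfl
  have h := tendsto_measure_iInter_atTop (μ := μ)
    (s := fun n => Set.Iic (sn n) ×ˢ (Set.univ : Set ℝ))
    (fun n => (measurableSet_Iic.prod MeasurableSet.univ).nullMeasurableSet)
    hAnt ⟨0, measure_ne_top μ _⟩
  have hInter : (⋂ n, Set.Iic (sn n) ×ˢ (Set.univ : Set ℝ))
      = Set.Iic s ×ˢ (Set.univ : Set ℝ) := by
    ext ⟨x, y⟩
    simp only [Set.mem_iInter, Set.mem_prod, Set.mem_Iic, Set.mem_univ, and_true]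
    exact forall_le_iff_le_of_anti hsn hst
  rw [hInter] at h
  exact (ENNReal.tendsto_toReal (measure_ne_top μ _)).comp h

lemma tendsto_marginCdf2 (htn : Antitone tn) (htt : Tendsto tn atTop (𝓝 t)) :
    Tendsto (fun n => marginCdf2 μ (tn n)) atTop (𝓝 (marginCdf2 μ t)) := by
  have hAnt : Antitone fun n => (Set.univ : Set ℝ) ×ˢ Set.Iic (tn n) := fun m n h =>
    Set.prod_mono subset_rfl (Set.Iic_subset_Iic.2 (htn h))
  have h := tendsto_measure_iInter_atTop (μ := μ)
    (s := fun n => (Set.univ : Set ℝ) ×ˢ Set.Iic (tn n))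
    (fun n => (MeasurableSet.univ.prod measurableSet_Iic).nullMeasurableSet)
    hAnt ⟨0, measure_ne_top μ _⟩
  have hInter : (⋂ n, (Set.univ : Set ℝ) ×ˢ Set.Iic (tn n))
      = (Set.univ : Set ℝ) ×ˢ Set.Iic t := by
    ext ⟨x, y⟩
    simp only [Set.mem_iInter, Set.mem_prod, Set.mem_Iic, Set.mem_univ, true_and]
    exact forall_le_iff_le_of_anti htn htt
  rw [hInter] at h
  exact (ENNReal.tendsto_toReal (measure_ne_top μ _)).comp h

end Tendsto

/-! ### biFreeMaxConv lemmas -/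

section Conv
variable (μ ν : Measure (ℝ × ℝ)) [IsProbabilityMeasure μ] [IsProbabilityMeasure ν]

/-- Abbreviation for the condition in the definition. -/
def biCond (s t : ℝ) : Prop :=
  0 < jointCdf μ s t ∧ 0 < jointCdf ν s t ∧
    0 < max (marginCdf1 μ s + marginCdf1 ν s - 1) 0 ∧
    0 < max (marginCdf2 μ t + marginCdf2 ν t - 1) 0

omit [IsProbabilityMeasure μ] [IsProbabilityMeasure ν] in
lemma biFree_of_pos {s t : ℝ} (h : biCond μ ν s t) :
    biFreeMaxConv μ ν s t =
      max (marginCdf1 μ s + marginCdf1 ν s - 1) 0 *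
        max (marginCdf2 μ t + marginCdf2 ν t - 1) 0 /
        (marginCdf1 μ s * marginCdf2 μ t / jointCdf μ s t +
          marginCdf1 ν s * marginCdf2 ν t / jointCdf ν s t - 1) := by
  exact if_pos h

omit [IsProbabilityMeasure μ] [IsProbabilityMeasure ν] in
lemma biFree_of_neg {s t : ℝ} (h : ¬ biCond μ ν s t) :
    biFreeMaxConv μ ν s t = 0 := by
  exact if_neg h

lemma biCond_mono {s₁ s₂ t₁ t₂ : ℝ} (hs : s₁ ≤ s₂) (ht : t₁ ≤ t₂)
    (h : biCond μ ν s₁ t₁) : biCond μ ν s₂ t₂ := by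
  obtain ⟨h1, h2, h3, h4⟩ := h
  refine ⟨lt_of_lt_of_le h1 (jointCdf_mono μ hs ht),
    lt_of_lt_of_le h2 (jointCdf_mono ν hs ht),
    lt_of_lt_of_le h3 (max_le_max (by
      have := marginCdf1_mono μ hs; have := marginCdf1_mono ν hs; linarith) le_rfl),
    lt_of_lt_of_le h4 (max_le_max (by
      have := marginCdf2_mono μ ht; have := marginCdf2_mono ν ht; linarith) le_rfl)⟩

lemma biFree_nonneg (s t : ℝ) : 0 ≤ biFreeMaxConv μ ν s t := by
  by_cases h : biCond μ ν s t
  · rw [biFree_of_pos μ ν h]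
    exact formula_nonneg _ _ _ _ _ _ h.1 h.2.1
      (jointCdf_le_margin1 μ s t) (jointCdf_le_margin2 μ s t)
      (jointCdf_le_margin1 ν s t) (jointCdf_le_margin2 ν s t)
      (max_pos' _ h.2.2.1)
  · rw [biFree_of_neg μ ν h]

lemma biFree_le_h1 (s t : ℝ) :
    biFreeMaxConv μ ν s t ≤ max (marginCdf1 μ s + marginCdf1 ν s - 1) 0 := by
  by_cases h : biCond μ ν s t
  · rw [biFree_of_pos μ ν h]
    exact formula_le_h1 _ _ _ _ _ _ h.1 h.2.1
      (jointCdf_le_margin1 μ s t) (jointCdf_le_margin2 μ s t)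
      (jointCdf_le_margin1 ν s t) (jointCdf_le_margin2 ν s t)
      (max_pos' _ h.2.2.1) (max_pos' _ h.2.2.2)
  · rw [biFree_of_neg μ ν h]; exact le_max_right _ _

lemma biFree_le_h2 (s t : ℝ) :
    biFreeMaxConv μ ν s t ≤ max (marginCdf2 μ t + marginCdf2 ν t - 1) 0 := by
  by_cases h : biCond μ ν s t
  · rw [biFree_of_pos μ ν h]
    exact formula_le_h2 _ _ _ _ _ _ h.1 h.2.1
      (jointCdf_le_margin1 μ s t) (jointCdf_le_margin2 μ s t)
      (jointCdf_le_margin1 ν s t) (jointCdf_le_margin2 ν s t)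
      (max_pos' _ h.2.2.1) (max_pos' _ h.2.2.2)
  · rw [biFree_of_neg μ ν h]; exact le_max_right _ _

lemma biFree_le_jointμ (s t : ℝ) : biFreeMaxConv μ ν s t ≤ jointCdf μ s t := by
  by_cases h : biCond μ ν s t
  · rw [biFree_of_pos μ ν h]
    exact formula_le_u _ _ _ _ _ _ h.1 h.2.1
      (jointCdf_le_margin1 μ s t) (jointCdf_le_margin2 μ s t)
      (jointCdf_le_margin1 ν s t) (jointCdf_le_margin2 ν s t)
      (marginCdf1_le_one ν s) (marginCdf2_le_one ν t)
      (max_pos' _ h.2.2.1) (max_pos' _ h.2.2.2)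
  · rw [biFree_of_neg μ ν h]; exact jointCdf_nonneg μ s t

lemma biFree_le_jointν (s t : ℝ) : biFreeMaxConv μ ν s t ≤ jointCdf ν s t := by
  by_cases h : biCond μ ν s t
  · rw [biFree_of_pos μ ν h]
    exact formula_le_w _ _ _ _ _ _ h.1 h.2.1
      (jointCdf_le_margin1 μ s t) (jointCdf_le_margin2 μ s t)
      (jointCdf_le_margin1 ν s t) (jointCdf_le_margin2 ν s t)
      (marginCdf1_le_one μ s) (marginCdf2_le_one μ t)
      (max_pos' _ h.2.2.1) (max_pos' _ h.2.2.2)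
  · rw [biFree_of_neg μ ν h]; exact jointCdf_nonneg ν s t

lemma biFree_mono_s {s₁ s₂ t : ℝ} (hs : s₁ ≤ s₂) :
    biFreeMaxConv μ ν s₁ t ≤ biFreeMaxConv μ ν s₂ t := by
  by_cases h : biCond μ ν s₁ t
  · have h' : biCond μ ν s₂ t := biCond_mono μ ν hs le_rfl h
    rw [biFree_of_pos μ ν h, biFree_of_pos μ ν h']
    exact formula_mono _ _ _ _ _ _ _ _ _ _ h.1 h.2.1
      (jointCdf_le_margin1 μ s₁ t) (jointCdf_le_margin2 μ s₁ t)
      (jointCdf_le_margin1 ν s₁ t) (jointCdf_le_margin2 ν s₁ t)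
      (marginCdf1_le_one μ s₂) (marginCdf1_le_one ν s₂)
      (max_pos' _ h.2.2.1)
      (marginCdf1_mono μ hs) (marginCdf1_mono ν hs)
      (jointCdf_mono μ hs le_rfl) (jointCdf_mono ν hs le_rfl)
      (jointCdf_le_margin2 μ s₂ t) (jointCdf_le_margin2 ν s₂ t)
  · rw [biFree_of_neg μ ν h]; exact biFree_nonneg μ ν s₂ t

lemma biFree_mono_t {s t₁ t₂ : ℝ} (ht : t₁ ≤ t₂) :
    biFreeMaxConv μ ν s t₁ ≤ biFreeMaxConv μ ν s t₂ := by
  by_cases h : biCond μ ν s t₁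
  · have h' : biCond μ ν s t₂ := biCond_mono μ ν le_rfl ht h
    rw [biFree_of_pos μ ν h, biFree_of_pos μ ν h']
    rw [formula_comm, formula_comm (marginCdf1 μ s)]
    exact formula_mono _ _ _ _ _ _ _ _ _ _ h.1 h.2.1
      (jointCdf_le_margin2 μ s t₁) (jointCdf_le_margin1 μ s t₁)
      (jointCdf_le_margin2 ν s t₁) (jointCdf_le_margin1 ν s t₁)
      (marginCdf2_le_one μ t₂) (marginCdf2_le_one ν t₂)
      (max_pos' _ h.2.2.2)
      (marginCdf2_mono μ ht) (marginCdf2_mono ν ht)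
      (jointCdf_mono μ le_rfl ht) (jointCdf_mono ν le_rfl ht)
      (jointCdf_le_margin1 μ s t₂) (jointCdf_le_margin1 ν s t₂)
  · rw [biFree_of_neg μ ν h]; exact biFree_nonneg μ ν s t₂

end Conv

/-- The bi-free max-convolution `H` of two compactly supported probability
measures on `ℝ²` is nondecreasing in each variable and right-continuous:
if `s_n ↓ s` and `t_n ↓ t` then `H(s_n, t_n) ↓ H(s, t)`. -/
theorem stmt13 (μ ν : Measure (ℝ × ℝ))
    [IsProbabilityMeasure μ] [IsProbabilityMeasure ν]
    (hμ : ∃ K : Set (ℝ × ℝ), IsCompact K ∧ μ Kᶜ = 0)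
    (hν : ∃ K : Set (ℝ × ℝ), IsCompact K ∧ ν Kᶜ = 0) :
    (∀ s₁ s₂ t₁ t₂ : ℝ, s₁ ≤ s₂ → t₁ ≤ t₂ →
      biFreeMaxConv μ ν s₁ t₁ ≤ biFreeMaxConv μ ν s₂ t₂) ∧
    (∀ (s t : ℝ) (sn tn : ℕ → ℝ),
      Antitone sn → Tendsto sn atTop (𝓝 s) →
      Antitone tn → Tendsto tn atTop (𝓝 t) →
      Tendsto (fun n => biFreeMaxConv μ ν (sn n) (tn n)) atTop
        (𝓝 (biFreeMaxConv μ ν s t))) := by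
  constructor
  · intro s₁ s₂ t₁ t₂ hs ht
    exact le_trans (biFree_mono_s μ ν hs) (biFree_mono_t μ ν ht)
  · intro s t sn tn hsn hst htn htt
    have hJμ := tendsto_jointCdf μ hsn hst htn htt
    have hJν := tendsto_jointCdf ν hsn hst htn htt
    have hM1μ := tendsto_marginCdf1 μ hsn hst
    have hM1ν := tendsto_marginCdf1 ν hsn hst
    have hM2μ := tendsto_marginCdf2 μ htn htt
    have hM2ν := tendsto_marginCdf2 ν htn htt
    have hH1 : Tendsto
        (fun n => max (marginCdf1 μ (sn n) + marginCdf1 ν (sn n) - 1) 0) atTop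
        (𝓝 (max (marginCdf1 μ s + marginCdf1 ν s - 1) 0)) :=
      ((hM1μ.add hM1ν).sub tendsto_const_nhds).max tendsto_const_nhds
    have hH2 : Tendsto
        (fun n => max (marginCdf2 μ (tn n) + marginCdf2 ν (tn n) - 1) 0) atTop
        (𝓝 (max (marginCdf2 μ t + marginCdf2 ν t - 1) 0)) :=
      ((hM2μ.add hM2ν).sub tendsto_const_nhds).max tendsto_const_nhds
    by_cases hc : biCond μ ν s t
    · have hcn : ∀ n, biCond μ ν (sn n) (tn n) := fun n =>
        biCond_mono μ ν (hsn.le_of_tendsto hst n) (htn.le_of_tendsto htt n) hc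
      have hDpos : 0 < marginCdf1 μ s * marginCdf2 μ t / jointCdf μ s t +
          marginCdf1 ν s * marginCdf2 ν t / jointCdf ν s t - 1 :=
        denom_pos _ _ _ _ _ _ hc.1 hc.2.1
          (jointCdf_le_margin1 μ s t) (jointCdf_le_margin2 μ s t)
          (jointCdf_le_margin1 ν s t) (jointCdf_le_margin2 ν s t)
          (max_pos' _ hc.2.2.1)
      have hden : Tendsto
          (fun n => marginCdf1 μ (sn n) * marginCdf2 μ (tn n) / jointCdf μ (sn n) (tn n) +
            marginCdf1 ν (sn n) * marginCdf2 ν (tn n) / jointCdf ν (sn n) (tn n) - 1) atTop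
          (𝓝 (marginCdf1 μ s * marginCdf2 μ t / jointCdf μ s t +
            marginCdf1 ν s * marginCdf2 ν t / jointCdf ν s t - 1)) :=
        (((hM1μ.mul hM2μ).div hJμ hc.1.ne').add
          ((hM1ν.mul hM2ν).div hJν hc.2.1.ne')).sub tendsto_const_nhds
      have big := ((hH1.mul hH2).div hden hDpos.ne')
      rw [biFree_of_pos μ ν hc]
      exact big.congr (fun n => (biFree_of_pos μ ν (hcn n)).symm)
    · rw [biFree_of_neg μ ν hc]
      by_cases h1 : 0 < jointCdf μ s t
      · by_cases h2 : 0 < jointCdf ν s t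
        · by_cases h3 : 0 < max (marginCdf1 μ s + marginCdf1 ν s - 1) 0
          · by_cases h4 : 0 < max (marginCdf2 μ t + marginCdf2 ν t - 1) 0
            · exact absurd ⟨h1, h2, h3, h4⟩ hc
            · have hz : max (marginCdf2 μ t + marginCdf2 ν t - 1) 0 = 0 :=
                le_antisymm (not_lt.1 h4) (le_max_right _ _)
              exact squeeze_zero (fun n => biFree_nonneg μ ν _ _)
                (fun n => biFree_le_h2 μ ν _ _) (by rw [hz] at hH2; exact hH2)
          · have hz : max (marginCdf1 μ s + marginCdf1 ν s - 1) 0 = 0 :=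
              le_antisymm (not_lt.1 h3) (le_max_right _ _)
            exact squeeze_zero (fun n => biFree_nonneg μ ν _ _)
              (fun n => biFree_le_h1 μ ν _ _) (by rw [hz] at hH1; exact hH1)
        · have hz : jointCdf ν s t = 0 :=
            le_antisymm (not_lt.1 h2) (jointCdf_nonneg ν s t)
          exact squeeze_zero (fun n => biFree_nonneg μ ν _ _)
            (fun n => biFree_le_jointν μ ν _ _) (by rw [hz] at hJν; exact hJν)
      · have hz : jointCdf μ s t = 0 :=
          le_antisymm (not_lt.1 h1) (jointCdf_nonneg μ s t)
        exact squeeze_zero (fun n => biFree_nonneg μ ν _ _)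
          (fun n => biFree_le_jointμ μ ν _ _) (by rw [hz] at hJμ; exact hJμ)
end

section
/- Let p, q, r, p', q', r' be real numbers satisfying max(0, p+q−1) ≤ r ≤ min(p,q), max(0, p'+q'−1) ≤ r' ≤ min(p',q'), r > 0, r' > 0, p + p' > 1, and q + q' > 1 (in particular 0 < p,q,p',q' ≤ 1). Then pq/r + p'q'/r' − 1 > 0, and the number t = (p+p'−1)(q+q'−1) / (pq/r + p'q'/r' − 1) satisfies max(0, (p+p'−1)+(q+q'−1)−1) ≤ t ≤ min(p+p'−1, q+q'−1). -/
/-- Key polynomial inequality in the "defect" variables. -/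
lemma stmt15_key (x y x' y' : ℝ) (hx : 0 ≤ x) (hy : 0 ≤ y) (hx' : 0 ≤ x')
    (hy' : 0 ≤ y') (hs : x + y + x' + y' ≤ 1) :
    2 * (x * y * x' * y') ≤ y * x' * (1 - y) * (1 - x') + x * y' * (1 - x) * (1 - y') := by
  have hA : x * y' ≤ (1 - y) * (1 - x') := by nlinarith
  have hB : y * x' ≤ (1 - x) * (1 - y') := by nlinarith
  nlinarith [mul_le_mul_of_nonneg_left hA (mul_nonneg hy hx'),
    mul_le_mul_of_nonneg_left hB (mul_nonneg hx hy')]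

set_option maxHeartbeats 1000000 in
/-- Numerical content of Theorem 2.1: for real numbers `p, q, r, p', q', r'`
with `max 0 (p+q-1) ≤ r ≤ min p q`, `max 0 (p'+q'-1) ≤ r' ≤ min p' q'`,
`r > 0`, `r' > 0`, `p + p' > 1`, `q + q' > 1`, one has
`pq/r + p'q'/r' - 1 > 0` and
`t = (p+p'-1)(q+q'-1)/(pq/r + p'q'/r' - 1)` satisfies
`max 0 ((p+p'-1)+(q+q'-1)-1) ≤ t ≤ min (p+p'-1) (q+q'-1)`. -/
theorem stmt15 (p q r p' q' r' : ℝ)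
    (h1 : max 0 (p + q - 1) ≤ r) (h2 : r ≤ min p q)
    (h1' : max 0 (p' + q' - 1) ≤ r') (h2' : r' ≤ min p' q')
    (hr : 0 < r) (hr' : 0 < r')
    (hpp' : 1 < p + p') (hqq' : 1 < q + q') :
    0 < p * q / r + p' * q' / r' - 1 ∧
    max 0 ((p + p' - 1) + (q + q' - 1) - 1) ≤
      (p + p' - 1) * (q + q' - 1) / (p * q / r + p' * q' / r' - 1) ∧
    (p + p' - 1) * (q + q' - 1) / (p * q / r + p' * q' / r' - 1) ≤
      min (p + p' - 1) (q + q' - 1) := by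
  have hrp : r ≤ p := h2.trans (min_le_left _ _)
  have hrq : r ≤ q := h2.trans (min_le_right _ _)
  have hrp' : r' ≤ p' := h2'.trans (min_le_left _ _)
  have hrq' : r' ≤ q' := h2'.trans (min_le_right _ _)
  have hur : p + q - 1 ≤ r := le_trans (le_max_right 0 _) h1
  have hur' : p' + q' - 1 ≤ r' := le_trans (le_max_right 0 _) h1'
  have hp0 : 0 < p := lt_of_lt_of_le hr hrp
  have hq0 : 0 < q := lt_of_lt_of_le hr hrq
  have hp0' : 0 < p' := lt_of_lt_of_le hr' hrp'
  have hq0' : 0 < q' := lt_of_lt_of_le hr' hrq'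
  have hp1 : p ≤ 1 := by linarith
  have hq1 : q ≤ 1 := by linarith
  have hp1' : p' ≤ 1 := by linarith
  have hq1' : q' ≤ 1 := by linarith
  set a := p * q / r with ha_def
  set b := p' * q' / r' with hb_def
  have har : a * r = p * q := div_mul_cancel₀ _ (ne_of_gt hr)
  have hbr : b * r' = p' * q' := div_mul_cancel₀ _ (ne_of_gt hr')
  have hap : p ≤ a := by rw [ha_def, le_div_iff₀ hr]; nlinarith
  have haq : q ≤ a := by rw [ha_def, le_div_iff₀ hr]; nlinarith
  have hbp : p' ≤ b := by rw [hb_def, le_div_iff₀ hr']; nlinarith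
  have hbq : q' ≤ b := by rw [hb_def, le_div_iff₀ hr']; nlinarith
  have hD : 0 < a + b - 1 := by linarith
  have hP : 0 < p + p' - 1 := by linarith
  have hQ : 0 < q + q' - 1 := by linarith
  refine ⟨hD, max_le ?_ ?_, le_min ?_ ?_⟩
  · positivity
  · rcases le_or_gt ((p + p' - 1) + (q + q' - 1) - 1) 0 with h | h
    · exact h.trans (by positivity)
    · rw [le_div_iff₀ hD]
      have hu : 0 < p + q - 1 := by linarith
      have hv : 0 < p' + q' - 1 := by linarith
      have ha0 : (0:ℝ) ≤ a := (hp0.trans_le hap).le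
      have hb0 : (0:ℝ) ≤ b := (hp0'.trans_le hbp).le
      have hau : a * (p + q - 1) ≤ p * q := by
        calc a * (p + q - 1) ≤ a * r := mul_le_mul_of_nonneg_left hur ha0
          _ = p * q := har
      have hbv : b * (p' + q' - 1) ≤ p' * q' := by
        calc b * (p' + q' - 1) ≤ b * r' := mul_le_mul_of_nonneg_left hur' hb0
          _ = p' * q' := hbr
      have hk := stmt15_key (1 - p) (1 - q) (1 - p') (1 - q')
        (by linarith) (by linarith) (by linarith) (by linarith) (by linarith)
      -- key2 : S * (pq*v + p'q'*u - u*v) ≤ P*Q*(u*v)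
      have key2 : ((p + p' - 1) + (q + q' - 1) - 1) *
          (p * q * (p' + q' - 1) + p' * q' * (p + q - 1) - (p + q - 1) * (p' + q' - 1))
          ≤ (p + p' - 1) * (q + q' - 1) * ((p + q - 1) * (p' + q' - 1)) := by
        linarith only [hk]
      have h3 : a * (p + q - 1) * (p' + q' - 1) ≤ p * q * (p' + q' - 1) :=
        mul_le_mul_of_nonneg_right hau hv.le
      have h4 : b * (p' + q' - 1) * (p + q - 1) ≤ p' * q' * (p + q - 1) :=
        mul_le_mul_of_nonneg_right hbv hu.le
      have step : ((p + p' - 1) + (q + q' - 1) - 1) * (a + b - 1) * ((p + q - 1) * (p' + q' - 1))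
          ≤ (p + p' - 1) * (q + q' - 1) * ((p + q - 1) * (p' + q' - 1)) := by
        have e3 := mul_le_mul_of_nonneg_left h3 h.le
        have e4 := mul_le_mul_of_nonneg_left h4 h.le
        linarith only [e3, e4, key2]
      have huv : 0 < (p + q - 1) * (p' + q' - 1) := mul_pos hu hv
      exact le_of_mul_le_mul_right step huv
  · rw [div_le_iff₀ hD]
    exact mul_le_mul_of_nonneg_left (by linarith : q + q' - 1 ≤ a + b - 1) hP.le
  · rw [div_le_iff₀ hD]
    calc (p + p' - 1) * (q + q' - 1)
        ≤ (a + b - 1) * (q + q' - 1) :=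
          mul_le_mul_of_nonneg_right (by linarith) hQ.le
      _ = (q + q' - 1) * (a + b - 1) := mul_comm _ _
end
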